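/- arXiv:1308.2139 — 4 statements merged into one kernel-verified Lean document; each statement's English description precedes it below -/
import Mathlib

section
/- Let α ∈ (0,1), c > 0 and λ ∈ ℝ. For z₁, z₂ > 0 define u(z₁,z₂) = ∑_{k=0}^∞ (λ/(2^α c^α))^{2k} (z₁ z₂)^{αk+α-1} / Γ(αk+α)². Then (4c²)^α · D^α_{z₁}(D^α_{z₂} u)(z₁,z₂) = λ² u(z₁,z₂) for all z₁, z₂ > 0, where D^α_{z_i} denotes the Riemann–Liouville fractional derivative of order α acting in the variable z_i. -/
/-!
Both fractional derivatives act termwise on series in the powers `t ^ (a * k + a - 1)`. By the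
Beta integral, `D^a t ^ (a * k + a - 1) = Γ(a * k + a) / Γ(a * k) * t ^ (a * k - 1)`, where the
`k = 0` term vanishes because `1 / Γ 0 = 0`. Applied in each variable this turns the `k`-th term
of `u` into `q ^ (2 * k) / Γ(a * k) ^ 2 * (z₁ * z₂) ^ (a * k - 1)`, which is `q ^ 2` times the
`(k - 1)`-st term of `u`, and `(4 * c ^ 2) ^ a * q ^ 2 = λ ^ 2` for `q = λ / (2 ^ a * c ^ a)`.
Termwise integration and differentiation are justified by the bound
`T ^ (x - 1) * exp (-T) ≤ Γ x` for all `T ≥ 1`, which makes every coefficient series that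
occurs an entire series in `t ^ a`.
-/

open Real MeasureTheory

/-- Riemann–Liouville fractional derivative of order `a ∈ (0,1)`:
`D^a f (z) = (d/dz)[(1/Γ(1-a)) ∫_0^z (z-u)^{-a} f(u) du]`. -/
noncomputable def RL (a : ℝ) (f : ℝ → ℝ) (z : ℝ) : ℝ :=
  deriv (fun x => (1 / Real.Gamma (1 - a)) * ∫ u in (0:ℝ)..x, (x - u) ^ (-a) * f u) z

open Filter Set Topology

namespace Real

theorem rpow_mul_natCast_add {y : ℝ} (hy : 0 < y) (a b : ℝ) (k : ℕ) :
    y ^ (a * k + b) = (y ^ a) ^ k * y ^ b := by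
  rw [rpow_add hy, rpow_mul_natCast hy.le]

theorem div_Gamma_add_one (x : ℝ) : x / Gamma (x + 1) = (Gamma x)⁻¹ := by
  rcases eq_or_ne x 0 with rfl | hx
  · simp [Gamma_zero]
  · rw [Gamma_add_one hx, div_mul_cancel_left₀ hx]

theorem rpow_sub_one_mul_exp_neg_le_Gamma_of_one_le {T x : ℝ} (hT : 0 ≤ T) (hx : 1 ≤ x) :
    T ^ (x - 1) * exp (-T) ≤ Gamma x := by
  have hint := GammaIntegral_convergent (zero_lt_one.trans_le hx)
  calc T ^ (x - 1) * exp (-T) = ∫ t in Ioi T, T ^ (x - 1) * exp (-t) := by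
        rw [integral_const_mul, integral_exp_neg_Ioi]
    _ ≤ ∫ t in Ioi T, exp (-t) * t ^ (x - 1) := by
        refine setIntegral_mono_on ((integrableOn_exp_neg_Ioi T).const_mul _)
          (hint.mono_set (Ioi_subset_Ioi hT)) measurableSet_Ioi fun t ht => ?_
        rw [mul_comm]
        gcongr
        exact ht.le
    _ ≤ ∫ t in Ioi 0, exp (-t) * t ^ (x - 1) :=
        setIntegral_mono_set hint ((ae_restrict_mem measurableSet_Ioi).mono fun t ht =>
          mul_nonneg (exp_pos _).le (rpow_nonneg (le_of_lt ht) _))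
          (Ioi_subset_Ioi hT).eventuallyLE
    _ = Gamma x := (Gamma_eq_integral (zero_lt_one.trans_le hx)).symm

theorem rpow_sub_one_mul_exp_neg_le_Gamma {T x : ℝ} (hT : 1 ≤ T) (hx : 0 < x) :
    T ^ (x - 1) * exp (-T) ≤ Gamma x := by
  rcases le_or_gt 1 x with hx1 | hx1
  · exact rpow_sub_one_mul_exp_neg_le_Gamma_of_one_le (by linarith) hx1
  calc T ^ (x - 1) * exp (-T) ≤ T ^ (x + 1 - 1) * exp (-T) := by
        gcongr
        linarith
    _ ≤ Gamma (x + 1) := rpow_sub_one_mul_exp_neg_le_Gamma_of_one_le (by linarith) (by linarith)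
    _ ≤ Gamma x := by
        rw [Gamma_add_one hx.ne']
        exact mul_le_of_le_one_left (Gamma_pos_of_pos hx).le hx1.le

theorem inv_Gamma_le_exp_one {x : ℝ} (hx : 0 < x) : (Gamma x)⁻¹ ≤ exp 1 := by
  have h := rpow_sub_one_mul_exp_neg_le_Gamma le_rfl hx
  rw [one_rpow, one_mul] at h
  rw [← inv_inv (exp 1), ← exp_neg]
  exact inv_anti₀ (exp_pos _) h

/-- For `b = 0` the `k = 0` term is `R ^ 0 / Γ(0) = 0`. -/
theorem summable_pow_div_Gamma_mul_add (R : ℝ) {a b : ℝ} (ha : 0 < a) (hb : 0 ≤ b) :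
    Summable fun k : ℕ => R ^ k / Gamma (a * k + b) := by
  set T := max 1 ((2 * |R|) ^ a⁻¹)
  have hT : 1 ≤ T := le_max_left _ _
  have hT0 : 0 < T := by linarith
  have hTa : 2 * |R| ≤ T ^ a :=
    calc 2 * |R| = ((2 * |R|) ^ a⁻¹) ^ a := (rpow_inv_rpow (by positivity) ha.ne').symm
      _ ≤ T ^ a := rpow_le_rpow (by positivity) (le_max_right _ _) ha.le
  refine .of_norm_bounded (summable_geometric_two.mul_left (T ^ (1 - b) * exp T)) fun k => ?_
  rcases (by positivity : 0 ≤ a * k + b).eq_or_lt with h0 | hpos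
  · rw [← h0, Gamma_zero, div_zero, norm_zero]
    positivity
  have hratio : (|R| / T ^ a) ^ k ≤ (1 / 2) ^ k := by
    refine pow_le_pow_left₀ (by positivity) ?_ k
    rw [div_le_div_iff₀ (by positivity) two_pos]
    linarith
  calc ‖R ^ k / Gamma (a * k + b)‖ = |R| ^ k / Gamma (a * k + b) := by
        rw [norm_div, norm_pow, Real.norm_eq_abs, Real.norm_of_nonneg (Gamma_pos_of_pos hpos).le]
    _ ≤ |R| ^ k / (T ^ (a * k + b - 1) * exp (-T)) :=
        div_le_div_of_nonneg_left (by positivity) (by positivity)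
          (rpow_sub_one_mul_exp_neg_le_Gamma hT hpos)
    _ = (|R| / T ^ a) ^ k * (T ^ (1 - b) * exp T) := by
        rw [add_sub_assoc, rpow_mul_natCast_add hT0, div_pow, exp_neg, rpow_sub hT0, rpow_sub hT0,
          rpow_one]
        field_simp
    _ ≤ T ^ (1 - b) * exp T * (1 / 2) ^ k := by
        rw [mul_comm]
        gcongr

end Real

theorem integral_rpow_mul_sub_rpow {s r z : ℝ} (hs : 0 < s) (hr : 0 < r) (hz : 0 < z) :
    ∫ t in (0 : ℝ)..z, t ^ (s - 1) * (z - t) ^ (r - 1)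
      = Gamma s * Gamma r / Gamma (s + r) * z ^ (s + r - 1) := by
  have hbeta := Complex.Gamma_mul_Gamma_eq_betaIntegral (s := s) (t := r) (by simpa) (by simpa)
  have hne : (Gamma (s + r) : ℂ) ≠ 0 := by
    exact_mod_cast (Gamma_pos_of_pos (add_pos hs hr)).ne'
  rw [← Complex.ofReal_add, Complex.Gamma_ofReal, Complex.Gamma_ofReal, Complex.Gamma_ofReal]
    at hbeta
  apply Complex.ofReal_injective
  rw [← intervalIntegral.integral_ofReal]
  calc ∫ t in (0 : ℝ)..z, ((t ^ (s - 1) * (z - t) ^ (r - 1) : ℝ) : ℂ)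
      = ∫ t in (0 : ℝ)..z, (t : ℂ) ^ ((s : ℂ) - 1) * ((z : ℂ) - t) ^ ((r : ℂ) - 1) := by
        refine intervalIntegral.integral_congr fun t ht => ?_
        rw [uIcc_of_le hz.le] at ht
        rw [Complex.ofReal_mul, Complex.ofReal_cpow ht.1, Complex.ofReal_cpow (sub_nonneg.2 ht.2)]
        push_cast
        rfl
    _ = (z : ℂ) ^ ((s : ℂ) + r - 1) * Complex.betaIntegral s r :=
        Complex.betaIntegral_scaled _ _ hz
    _ = _ := by
        rw [show Complex.betaIntegral s r = Gamma s * Gamma r / Gamma (s + r) by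
            rw [hbeta, mul_div_cancel_left₀ _ hne], Complex.ofReal_mul, Complex.ofReal_cpow hz.le]
        push_cast
        ring

theorem integral_sub_rpow_neg_mul_rpow {a b x : ℝ} (ha : a < 1) (hb : 0 < b) (hx : 0 < x) :
    ∫ t in (0 : ℝ)..x, (x - t) ^ (-a) * t ^ (b - 1)
      = Gamma b * Gamma (1 - a) / Gamma (b + 1 - a) * x ^ (b - a) := by
  rw [show b + 1 - a = b + (1 - a) by ring, show b - a = b + (1 - a) - 1 by ring,
    ← integral_rpow_mul_sub_rpow hb (sub_pos.2 ha) hx, sub_sub_cancel_left]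
  exact intervalIntegral.integral_congr fun t _ => mul_comm _ _

theorem intervalIntegrable_sub_rpow_neg_mul_rpow {a b x : ℝ} (ha : a < 1) (hb : 0 < b)
    (hx : 0 < x) : IntervalIntegrable (fun t => (x - t) ^ (-a) * t ^ (b - 1)) volume 0 x := by
  refine intervalIntegral.intervalIntegrable_of_integral_ne_zero ?_
  rw [integral_sub_rpow_neg_mul_rpow ha hb hx]
  have : 0 < b + 1 - a := by linarith
  have : 0 < 1 - a := by linarith
  positivity

theorem summable_abs_mul_Gamma_div {a r : ℝ} (ha : 0 ≤ a) {C : ℕ → ℝ}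
    (hC : Summable fun k : ℕ => |C k| * Gamma (a * k + a) * r ^ k) (hr : 0 ≤ r) :
    Summable fun k : ℕ => |C k * Gamma (a * k + a) / Gamma (a * k + 1)| * r ^ k := by
  refine .of_nonneg_of_le (fun k => by positivity) (fun k => ?_) (hC.mul_left (exp 1))
  have hΓ : 0 ≤ Gamma (a * k + a) := Gamma_nonneg_of_nonneg (by positivity)
  rw [abs_div, abs_mul, abs_of_nonneg hΓ, abs_of_pos (Gamma_pos_of_pos (by positivity)),
    div_eq_mul_inv]
  calc |C k| * Gamma (a * k + a) * (Gamma (a * k + 1))⁻¹ * r ^ k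
      ≤ |C k| * Gamma (a * k + a) * exp 1 * r ^ k := by
        gcongr
        exact inv_Gamma_le_exp_one (by positivity)
    _ = exp 1 * (|C k| * Gamma (a * k + a) * r ^ k) := by ring

theorem hasDerivAt_tsum_mul_rpow {ρ : ℝ} (hρ : 0 ≤ ρ) {D : ℕ → ℝ}
    (hD : ∀ r, 0 < r → Summable fun k : ℕ => |D k| * r ^ k) {z : ℝ} (hz : 0 < z) :
    HasDerivAt (fun y => ∑' k : ℕ, D k * y ^ (ρ * k))
      (∑' k : ℕ, D k * (ρ * k * z ^ (ρ * k - 1))) z := by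
  have hz_mem : z ∈ Ioo (z / 2) (2 * z) := ⟨by linarith, by linarith⟩
  have hbound (k : ℕ) (y : ℝ) (hy : y ∈ Ioo (z / 2) (2 * z)) :
      ‖D k * (ρ * k * y ^ (ρ * k - 1))‖
        ≤ 2 * ρ / z * (|D k| * (2 * (2 * z) ^ ρ) ^ k) := by
    have hy0 : 0 < y := by linarith [hy.1]
    have hk : (k : ℝ) ≤ 2 ^ k := by exact_mod_cast Nat.lt_two_pow_self.le
    calc ‖D k * (ρ * k * y ^ (ρ * k - 1))‖ = |D k| * (ρ * k * (y ^ (ρ * k) * y⁻¹)) := by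
          rw [norm_mul, Real.norm_eq_abs, Real.norm_of_nonneg (by positivity), rpow_sub_one hy0.ne']
          rfl
      _ ≤ |D k| * (ρ * 2 ^ k * ((2 * z) ^ (ρ * k) * (z / 2)⁻¹)) := by
          gcongr
          · exact hy.2.le
          · exact hy.1.le
      _ = 2 * ρ / z * (|D k| * (2 * (2 * z) ^ ρ) ^ k) := by
          rw [rpow_mul_natCast (by positivity), mul_pow]
          field_simp
  refine hasDerivAt_tsum_of_isPreconnected
    (((hD _ (by positivity)).mul_left (2 * ρ / z))) isOpen_Ioo isPreconnected_Ioo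
    (fun k y hy => ((hasDerivAt_rpow_const (Or.inl (by linarith [hy.1]))).const_mul (D k)))
    hbound hz_mem ?_ hz_mem
  refine .of_norm_bounded (hD (z ^ ρ) (by positivity)) fun k => ?_
  rw [norm_mul, Real.norm_eq_abs, Real.norm_of_nonneg (by positivity), rpow_mul_natCast hz.le]

/-- The Riemann–Liouville integral of order `1 - a`; `RL a f` is its derivative. -/
noncomputable def fracIntegral (a : ℝ) (f : ℝ → ℝ) (x : ℝ) : ℝ :=
  1 / Gamma (1 - a) * ∫ u in (0 : ℝ)..x, (x - u) ^ (-a) * f u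

section FractionalPowerSeries

variable {a : ℝ} {C : ℕ → ℝ} {f : ℝ → ℝ}

theorem fracIntegral_eq_tsum (ha : 0 < a) (ha1 : a < 1)
    (hf : ∀ t, 0 < t → f t = ∑' k : ℕ, C k * t ^ (a * k + a - 1))
    (hC : ∀ r, 0 < r → Summable fun k : ℕ => |C k| * Gamma (a * k + a) * r ^ k)
    {x : ℝ} (hx : 0 < x) :
    fracIntegral a f x
      = ∑' k : ℕ, C k * Gamma (a * k + a) / Gamma (a * k + 1) * x ^ (a * k) := by
  have hb (k : ℕ) : 0 < a * k + a := by positivity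
  set G : ℕ → ℝ → ℝ := fun k t => (x - t) ^ (-a) * t ^ (a * k + a - 1)
  have hG_nonneg (k : ℕ) : ∀ t ∈ Ioc 0 x, 0 ≤ G k t := fun t ht =>
    mul_nonneg (rpow_nonneg (sub_nonneg.2 ht.2) _) (rpow_nonneg ht.1.le _)
  have hG_int (k : ℕ) : IntegrableOn (G k) (Ioc 0 x) :=
    (intervalIntegrable_iff_integrableOn_Ioc_of_le hx.le).1
      (intervalIntegrable_sub_rpow_neg_mul_rpow ha1 (hb k) hx)
  have hG_val (k : ℕ) : ∫ t in Ioc 0 x, G k t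
      = Gamma (a * k + a) * Gamma (1 - a) / Gamma (a * k + 1) * (x ^ a) ^ k := by
    rw [← intervalIntegral.integral_of_le hx.le, integral_sub_rpow_neg_mul_rpow ha1 (hb k) hx,
      add_sub_cancel_right, ← rpow_mul_natCast hx.le, mul_comm a]
    ring_nf
  have hG_norm (k : ℕ) : ∫ t in Ioc 0 x, ‖C k * G k t‖
      = Gamma (1 - a) * (|C k * Gamma (a * k + a) / Gamma (a * k + 1)| * (x ^ a) ^ k) := by
    rw [setIntegral_congr_fun measurableSet_Ioc fun t ht => by
        rw [norm_mul, Real.norm_of_nonneg (hG_nonneg k t ht), Real.norm_eq_abs],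
      integral_const_mul, hG_val, abs_div, abs_mul, abs_of_pos (Gamma_pos_of_pos (hb k)),
      abs_of_pos (Gamma_pos_of_pos (by positivity))]
    ring
  have hsum : Summable fun k => ∫ t in Ioc 0 x, ‖C k * G k t‖ := by
    simp_rw [hG_norm]
    exact (summable_abs_mul_Gamma_div ha.le (hC _ (by positivity)) (by positivity)).mul_left _
  calc fracIntegral a f x = 1 / Gamma (1 - a) * ∫ t in Ioc 0 x, ∑' k, C k * G k t := by
        rw [fracIntegral, intervalIntegral.integral_of_le hx.le]
        congr 1
        refine setIntegral_congr_fun measurableSet_Ioc fun t ht => ?_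
        simp only [G, hf t ht.1, ← tsum_mul_left]
        exact tsum_congr fun k => by ring
    _ = ∑' k : ℕ, 1 / Gamma (1 - a) * (C k * ∫ t in Ioc 0 x, G k t) := by
        rw [← integral_tsum_of_summable_integral_norm (fun k => (hG_int k).const_mul _) hsum,
          ← tsum_mul_left]
        simp only [integral_const_mul]
    _ = _ := by
        refine tsum_congr fun k => ?_
        rw [hG_val, ← rpow_mul_natCast hx.le, mul_comm a]
        field_simp [(Gamma_pos_of_pos (sub_pos.2 ha1)).ne']

theorem RL_eq_tsum (ha : 0 < a) (ha1 : a < 1)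
    (hf : ∀ t, 0 < t → f t = ∑' k : ℕ, C k * t ^ (a * k + a - 1))
    (hC : ∀ r, 0 < r → Summable fun k : ℕ => |C k| * Gamma (a * k + a) * r ^ k)
    {z : ℝ} (hz : 0 < z) :
    RL a f z = ∑' k : ℕ, C k * Gamma (a * k + a) / Gamma (a * k) * z ^ (a * k - 1) := by
  have hderiv := hasDerivAt_tsum_mul_rpow ha.le
    (fun r hr => summable_abs_mul_Gamma_div ha.le (hC r hr) hr.le) hz
  have hI : fracIntegral a f =ᶠ[𝓝 z]
      fun y => ∑' k : ℕ, C k * Gamma (a * k + a) / Gamma (a * k + 1) * y ^ (a * k) :=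
    eventually_of_mem (Ioi_mem_nhds hz) fun y hy => fracIntegral_eq_tsum ha ha1 hf hC hy
  change deriv (fracIntegral a f) z = _
  rw [hI.deriv_eq, hderiv.deriv]
  refine tsum_congr fun k => ?_
  rw [div_eq_mul_inv _ (Gamma (a * k)), ← div_Gamma_add_one]
  ring

end FractionalPowerSeries

theorem RL_RL_eq_tsum {a : ℝ} (ha : 0 < a) (ha1 : a < 1) {c : ℕ → ℝ}
    (hc : ∀ r, 0 < r → Summable fun k : ℕ => |c k| * Gamma (a * k + a) * r ^ k)
    (hc' : ∀ r, 0 < r →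
      Summable fun k : ℕ => |c k| * Gamma (a * k + a) ^ 2 / Gamma (a * k) * r ^ k)
    {u : ℝ → ℝ → ℝ}
    (hu : ∀ y₁ y₂, 0 < y₁ → 0 < y₂ →
      u y₁ y₂ = ∑' k : ℕ, c k * (y₁ * y₂) ^ (a * k + a - 1))
    {z₁ z₂ : ℝ} (hz₁ : 0 < z₁) (hz₂ : 0 < z₂) :
    RL a (fun y₁ => RL a (fun y₂ => u y₁ y₂) z₂) z₁ = ∑' k : ℕ,
      c k * (Gamma (a * k + a) / Gamma (a * k)) ^ 2 * (z₁ * z₂) ^ (a * k - 1) := by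
  have hinner (y₁ : ℝ) (hy₁ : 0 < y₁) : RL a (fun y₂ => u y₁ y₂) z₂ = ∑' k : ℕ,
      c k * Gamma (a * k + a) / Gamma (a * k) * z₂ ^ (a * k - 1) * y₁ ^ (a * k + a - 1) := by
    refine (RL_eq_tsum ha ha1 (C := fun k => c k * y₁ ^ (a * k + a - 1)) (fun t ht => ?_)
      (fun r hr => ?_) hz₂).trans (tsum_congr fun k => by ring)
    · rw [hu y₁ t hy₁ ht]
      exact tsum_congr fun k => by rw [mul_rpow hy₁.le ht.le]; ring
    · refine ((hc _ (by positivity : 0 < y₁ ^ a * r)).mul_left (y₁ ^ (a - 1))).congr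
        fun k => ?_
      rw [abs_mul, abs_of_pos (rpow_pos_of_pos hy₁ _), add_sub_assoc, rpow_mul_natCast_add hy₁]
      ring
  rw [RL_eq_tsum ha ha1 hinner (fun r hr => ?_) hz₁]
  · refine tsum_congr fun k => ?_
    rw [mul_rpow hz₁.le hz₂.le]
    ring
  refine ((hc' _ (by positivity : 0 < z₂ ^ a * r)).mul_left (z₂ ^ (-1 : ℝ))).congr fun k => ?_
  rw [abs_mul, abs_div, abs_mul, abs_of_pos (rpow_pos_of_pos hz₂ _),
    abs_of_nonneg (Gamma_nonneg_of_nonneg (by positivity : 0 ≤ a * k + a)),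
    abs_of_nonneg (Gamma_nonneg_of_nonneg (by positivity : 0 ≤ a * k)), sub_eq_add_neg,
    rpow_mul_natCast_add hz₂]
  ring

theorem RL_RL_tsum_pow_div_Gamma_sq {a : ℝ} (ha : 0 < a) (ha1 : a < 1) (R : ℝ)
    {u : ℝ → ℝ → ℝ} (hu : ∀ y₁ y₂, 0 < y₁ → 0 < y₂ →
      u y₁ y₂ = ∑' k : ℕ, R ^ k / Gamma (a * k + a) ^ 2 * (y₁ * y₂) ^ (a * k + a - 1))
    {z₁ z₂ : ℝ} (hz₁ : 0 < z₁) (hz₂ : 0 < z₂) :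
    RL a (fun y₁ => RL a (fun y₂ => u y₁ y₂) z₂) z₁ = R * u z₁ z₂ := by
  have hΓ (k : ℕ) : 0 < Gamma (a * k + a) := Gamma_pos_of_pos (by positivity)
  have hc (r : ℝ) (_ : 0 < r) : Summable fun k : ℕ =>
      |R ^ k / Gamma (a * k + a) ^ 2| * Gamma (a * k + a) * r ^ k := by
    refine (summable_pow_div_Gamma_mul_add (|R| * r) ha ha.le).congr fun k => ?_
    rw [abs_div, abs_pow, abs_of_pos (pow_pos (hΓ k) 2), mul_pow]
    field_simp [(hΓ k).ne']
  have hc' (r : ℝ) (_ : 0 < r) : Summable fun k : ℕ =>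
      |R ^ k / Gamma (a * k + a) ^ 2| * Gamma (a * k + a) ^ 2 / Gamma (a * k) * r ^ k := by
    refine (summable_pow_div_Gamma_mul_add (|R| * r) ha le_rfl).congr fun k => ?_
    rw [add_zero, abs_div, abs_pow, abs_of_pos (pow_pos (hΓ k) 2), mul_pow]
    field_simp [(hΓ k).ne']
  rw [RL_RL_eq_tsum ha ha1 hc hc' hu hz₁ hz₂, hu z₁ z₂ hz₁ hz₂, ← tsum_mul_left]
  -- the `k = 0` term vanishes (`Γ 0 = 0`), so reindexing by `k + 1` needs no summability
  rw [← Nat.succ_injective.tsum_eq]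
  · refine tsum_congr fun k => ?_
    rw [Nat.succ_eq_add_one, Nat.cast_succ, mul_add_one]
    field_simp [(hΓ k).ne', (Gamma_pos_of_pos (by positivity : 0 < a * k + a + a)).ne']
    ring
  · rintro (_ | k) hk
    · simp [Gamma_zero] at hk
    · exact ⟨k, rfl⟩

theorem stmt3 (a c lam : ℝ) (ha : 0 < a ∧ a < 1) (hc : 0 < c)
    (u : ℝ → ℝ → ℝ)
    (hu : ∀ z1 z2 : ℝ, 0 < z1 → 0 < z2 →
      u z1 z2 = ∑' k : ℕ, (lam / ((2:ℝ) ^ a * c ^ a)) ^ (2 * k) *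
        (z1 * z2) ^ (a * (k : ℝ) + a - 1) / Real.Gamma (a * (k : ℝ) + a) ^ 2)
    (z1 z2 : ℝ) (h1 : 0 < z1) (h2 : 0 < z2) :
    (4 * c ^ 2) ^ a * RL a (fun y1 => RL a (fun y2 => u y1 y2) z2) z1
      = lam ^ 2 * u z1 z2 := by
  obtain ⟨ha0, ha1⟩ := ha
  have hq : (4 * c ^ 2) ^ a * (lam / ((2:ℝ) ^ a * c ^ a)) ^ 2 = lam ^ 2 := by
    rw [← mul_rpow zero_le_two hc.le, div_pow, ← rpow_mul_natCast (by positivity), mul_comm a,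
      rpow_natCast_mul (by positivity)]
    field_simp
    ring_nf
  have hu' (y₁ y₂ : ℝ) (hy₁ : 0 < y₁) (hy₂ : 0 < y₂) : u y₁ y₂ = ∑' k : ℕ,
      ((lam / ((2:ℝ) ^ a * c ^ a)) ^ 2) ^ k / Gamma (a * k + a) ^ 2
        * (y₁ * y₂) ^ (a * k + a - 1) :=
    (hu y₁ y₂ hy₁ hy₂).trans (tsum_congr fun k => by rw [pow_mul, div_mul_eq_mul_div])
  rw [RL_RL_tsum_pow_div_Gamma_sq ha0 ha1 _ hu' h1 h2, ← mul_assoc, hq]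
end

section
/- Let c > 0 and λ ∈ ℝ. Define u : ℝ × ℝ → ℝ by u(x,t) = ∑_{k=0}^∞ (λ/(2c))^{2k} (c²t² - x²)^k / (k!)², i.e. u(x,t) = I₀((λ/c)√(c²t² - x²)) in terms of the modified Bessel function of the first kind of order zero on the region |x| < ct. Then u is smooth and satisfies the Klein–Gordon equation ∂²u/∂t² - c² ∂²u/∂x² = λ² u at every point (x,t) ∈ ℝ². -/
open Real

private lemma aux_summable {a : ℕ → ℝ}
    (ha : ∀ r : ℝ, 1 ≤ r → Summable fun k : ℕ => |a k| * r ^ k) (z : ℝ) :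
    Summable fun k : ℕ => a k * z ^ k := by
  refine Summable.of_norm_bounded (ha (max 1 |z|) (le_max_left _ _)) fun k => ?_
  rw [norm_mul, norm_pow, Real.norm_eq_abs, Real.norm_eq_abs]
  exact mul_le_mul_of_nonneg_left
    (pow_le_pow_left₀ (abs_nonneg z) (le_max_right _ _) k) (abs_nonneg _)

private lemma aux_shift {a : ℕ → ℝ}
    (ha : ∀ r : ℝ, 1 ≤ r → Summable fun k : ℕ => |a k| * r ^ k) :
    ∀ r : ℝ, 1 ≤ r → Summable fun k : ℕ => |((k + 1 : ℕ) : ℝ) * a (k + 1)| * r ^ k := by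
  intro r hr
  have h2 : Summable fun k : ℕ => |a (k + 1)| * (2 * r) ^ (k + 1) :=
    (summable_nat_add_iff (f := fun k : ℕ => |a k| * (2 * r) ^ k) 1).2 (ha (2 * r) (by linarith))
  refine Summable.of_nonneg_of_le (fun k => by positivity) (fun k => ?_) h2
  have hk : ((k : ℝ) + 1) ≤ 2 ^ (k + 1) := by
    exact_mod_cast (Nat.lt_two_pow_self (n := k + 1)).le
  have hrk : r ^ k ≤ r ^ (k + 1) := pow_le_pow_right₀ hr (Nat.le_succ k)
  have h0 : (0:ℝ) ≤ r ^ k := by positivity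
  have hA := abs_nonneg (a (k+1))
  have h2k : (0:ℝ) < 2 ^ (k+1) := by positivity
  rw [abs_mul, Nat.abs_cast]
  push_cast
  have h5 : ((k : ℝ) + 1) * r ^ k ≤ 2 ^ (k+1) * r ^ (k+1) :=
    mul_le_mul hk hrk h0 h2k.le
  calc ((k : ℝ) + 1) * |a (k + 1)| * r ^ k
      = |a (k + 1)| * (((k : ℝ) + 1) * r ^ k) := by ring
    _ ≤ |a (k + 1)| * (2 ^ (k+1) * r ^ (k+1)) := mul_le_mul_of_nonneg_left h5 hA
    _ = |a (k + 1)| * (2 * r) ^ (k + 1) := by rw [mul_pow]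

private lemma aux_hasDerivAt {a : ℕ → ℝ}
    (ha : ∀ r : ℝ, 1 ≤ r → Summable fun k : ℕ => |a k| * r ^ k) (z : ℝ) :
    HasDerivAt (fun x => ∑' k : ℕ, a k * x ^ k)
      (∑' k : ℕ, ((k + 1 : ℕ) : ℝ) * a (k + 1) * z ^ k) z := by
  set R : ℝ := |z| + 1 with hRdef
  have hR1 : 1 ≤ R := by have := abs_nonneg z; simp only [hRdef]; linarith
  have hu : Summable fun k : ℕ => ((k : ℝ) + 1) * |a k| * R ^ k := by
    have h2 : Summable fun k : ℕ => 2 * (|a k| * (2 * R) ^ k) :=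
      (ha (2 * R) (by linarith)).mul_left 2
    refine Summable.of_nonneg_of_le (fun k => by positivity) (fun k => ?_) h2
    have hk : ((k : ℝ) + 1) ≤ 2 * 2 ^ k := by
      have h := (Nat.lt_two_pow_self (n := k + 1)).le
      have : ((k:ℝ) + 1) ≤ 2 ^ (k+1) := by exact_mod_cast h
      calc ((k:ℝ) + 1) ≤ 2 ^ (k+1) := this
        _ = 2 * 2 ^ k := by ring
    have h0 : (0:ℝ) ≤ R ^ k := by positivity
    have hA := abs_nonneg (a k)
    calc ((k : ℝ) + 1) * |a k| * R ^ k
        = (((k:ℝ) + 1) * R ^ k) * |a k| := by ring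
      _ ≤ ((2 * 2 ^ k) * R ^ k) * |a k| := by
          refine mul_le_mul_of_nonneg_right (mul_le_mul_of_nonneg_right hk h0) hA
      _ = 2 * (|a k| * (2 * R) ^ k) := by rw [mul_pow]; ring
  have hbound : ∀ k : ℕ, ∀ y ∈ Metric.ball (0:ℝ) R,
      ‖a k * ((k : ℝ) * y ^ (k - 1))‖ ≤ ((k : ℝ) + 1) * |a k| * R ^ k := by
    intro k y hy
    have hyR : |y| ≤ R := by
      rw [Metric.mem_ball, dist_zero_right, Real.norm_eq_abs] at hy; linarith
    rw [Real.norm_eq_abs, abs_mul, abs_mul, Nat.abs_cast, abs_pow]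
    have h1 : |y| ^ (k - 1) ≤ R ^ k :=
      le_trans (pow_le_pow_left₀ (abs_nonneg y) hyR _)
        (pow_le_pow_right₀ hR1 (Nat.sub_le k 1))
    have h4 : (0:ℝ) ≤ |y| ^ (k-1) := by positivity
    have h5 : (k:ℝ) * |y| ^ (k - 1) ≤ ((k:ℝ) + 1) * R ^ k :=
      mul_le_mul (by linarith [Nat.cast_nonneg (α := ℝ) k]) h1 h4 (by positivity)
    calc |a k| * ((k:ℝ) * |y| ^ (k - 1)) ≤ |a k| * (((k:ℝ) + 1) * R ^ k) :=
          mul_le_mul_of_nonneg_left h5 (abs_nonneg _)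
      _ = ((k : ℝ) + 1) * |a k| * R ^ k := by ring
  have key := hasDerivAt_tsum_of_isPreconnected hu Metric.isOpen_ball
    (convex_ball (0:ℝ) R).isPreconnected
    (fun k y _ => (hasDerivAt_pow k y).const_mul (a k))
    hbound (Metric.mem_ball_self (by linarith : (0:ℝ) < R))
    (Summable.of_norm_bounded (ha 1 le_rfl) (fun k => by
      rw [Real.norm_eq_abs, abs_mul, abs_pow, abs_zero]
      calc |a k| * 0 ^ k ≤ |a k| * 1 := by
            refine mul_le_mul_of_nonneg_left (pow_le_one₀ le_rfl zero_le_one) (abs_nonneg _)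
        _ = |a k| * 1 ^ k := by rw [one_pow]))
    (by rw [Metric.mem_ball, dist_zero_right, Real.norm_eq_abs]; linarith : z ∈ Metric.ball (0:ℝ) R)
  have hsum : Summable fun k : ℕ => a k * ((k : ℝ) * z ^ (k - 1)) := by
    refine Summable.of_norm_bounded hu fun k => hbound k z ?_
    rw [Metric.mem_ball, dist_zero_right, Real.norm_eq_abs]; linarith
  have heq : (∑' k : ℕ, a k * ((k : ℝ) * z ^ (k - 1)))
      = ∑' k : ℕ, ((k + 1 : ℕ) : ℝ) * a (k + 1) * z ^ k := by
    rw [Summable.tsum_eq_zero_add hsum]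
    simp only [Nat.cast_zero, zero_mul, mul_zero, zero_add]
    exact tsum_congr fun k => by push_cast; ring
  rw [← heq]
  exact key


private noncomputable def A0 (μ : ℝ) : ℕ → ℝ := fun k => μ ^ k / ((k.factorial : ℝ)) ^ 2
private noncomputable def A1 (μ : ℝ) : ℕ → ℝ := fun k => ((k + 1 : ℕ) : ℝ) * A0 μ (k + 1)
private noncomputable def A2 (μ : ℝ) : ℕ → ℝ := fun k => ((k + 1 : ℕ) : ℝ) * A1 μ (k + 1)

private lemma hA0 (μ : ℝ) (hμ : 0 ≤ μ) :
    ∀ r : ℝ, 1 ≤ r → Summable fun k : ℕ => |A0 μ k| * r ^ k := by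
  intro r hr
  refine Summable.of_nonneg_of_le (fun k => by positivity) (fun k => ?_)
    (Real.summable_pow_div_factorial (μ * r))
  have hf1 : (1:ℝ) ≤ (k.factorial : ℝ) := by exact_mod_cast k.factorial_pos
  have hf0 : (0:ℝ) < (k.factorial : ℝ) := by linarith
  simp only [A0]
  rw [abs_of_nonneg (by positivity)]
  have h1 : μ ^ k / ((k.factorial:ℝ)) ^ 2 * r ^ k = (μ * r) ^ k / ((k.factorial:ℝ))^2 := by
    rw [mul_pow]; ring
  rw [h1]
  have h2 : (k.factorial:ℝ) ≤ ((k.factorial:ℝ))^2 := by nlinarith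
  have h3 : (0:ℝ) ≤ (μ*r)^k := by positivity
  exact div_le_div_of_nonneg_left h3 hf0 h2

private lemma hA_rec (μ : ℝ) (k : ℕ) : A2 μ k + A1 μ (k + 1) = μ * A0 μ (k + 1) := by
  simp only [A2, A1, A0]
  have h1 : ((k + 1 + 1).factorial : ℝ) = ((k + 2 : ℕ) : ℝ) * ((k + 1).factorial : ℝ) := by
    rw [show k + 1 + 1 = (k + 1) + 1 from rfl, Nat.factorial_succ]
    push_cast; ring
  have h2 : ((k + 1).factorial : ℝ) ≠ 0 := by
    exact_mod_cast (k + 1).factorial_ne_zero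
  have h3 : ((k + 2 : ℕ) : ℝ) ≠ 0 := by positivity
  rw [h1]
  field_simp
  push_cast
  ring

private lemma hsum_id (μ : ℝ) (hμ : 0 ≤ μ)
    (hA1s : ∀ r : ℝ, 1 ≤ r → Summable fun k : ℕ => |A1 μ k| * r ^ k)
    (hA2s : ∀ r : ℝ, 1 ≤ r → Summable fun k : ℕ => |A2 μ k| * r ^ k) (z : ℝ) :
    z * (∑' k : ℕ, A2 μ k * z ^ k) + (∑' k : ℕ, A1 μ k * z ^ k)
      = μ * ∑' k : ℕ, A0 μ k * z ^ k := by
  have s0 : Summable fun k : ℕ => A0 μ k * z ^ k := aux_summable (hA0 μ hμ) z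
  have s1 : Summable fun k : ℕ => A1 μ k * z ^ k := aux_summable hA1s z
  have s2 : Summable fun k : ℕ => A2 μ k * z ^ k := aux_summable hA2s z
  have hshift1 : Summable fun k : ℕ => A1 μ (k + 1) * z ^ (k + 1) :=
    (summable_nat_add_iff (f := fun k : ℕ => A1 μ k * z ^ k) 1).2 s1
  have hz2 : Summable fun k : ℕ => z * (A2 μ k * z ^ k) := s2.mul_left z
  have hmain : (∑' k : ℕ, z * (A2 μ k * z ^ k)) + (∑' k : ℕ, A1 μ (k + 1) * z ^ (k + 1))
      = ∑' k : ℕ, μ * (A0 μ (k + 1) * z ^ (k + 1)) := by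
    rw [← Summable.tsum_add hz2 hshift1]
    refine tsum_congr fun k => ?_
    have hrec := hA_rec μ k
    calc z * (A2 μ k * z ^ k) + A1 μ (k + 1) * z ^ (k + 1)
        = (A2 μ k + A1 μ (k + 1)) * z ^ (k + 1) := by ring
      _ = μ * (A0 μ (k + 1) * z ^ (k + 1)) := by rw [hrec]; ring
  have hA10 : A1 μ 0 = μ := by simp [A1, A0]
  have hA00 : A0 μ 0 = 1 := by simp [A0]
  rw [← tsum_mul_left (a := z), ← tsum_mul_left (a := μ), Summable.tsum_eq_zero_add s1,
    Summable.tsum_eq_zero_add (s0.mul_left μ), hA10, hA00]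
  simp only [pow_zero, mul_one]
  linarith [hmain]

private lemma hF_contDiff (μ : ℝ) (hμ : 0 ≤ μ) :
    ContDiff ℝ (⊤ : ℕ∞) (fun z : ℝ => ∑' k : ℕ, A0 μ k * z ^ k) := by
  set p : FormalMultilinearSeries ℝ ℝ ℝ := FormalMultilinearSeries.ofScalars ℝ (A0 μ) with hp
  have hsum_eq : (fun z : ℝ => ∑' k : ℕ, A0 μ k * z ^ k) = p.sum := by
    funext z
    rw [FormalMultilinearSeries.sum]
    exact tsum_congr fun n => by
      rw [hp, FormalMultilinearSeries.ofScalars_apply_eq, smul_eq_mul]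
  have hradtop : p.radius = ⊤ := by
    apply FormalMultilinearSeries.radius_eq_top_of_summable_norm
    intro r
    have h1 := hA0 μ hμ (max 1 (r : ℝ)) (le_max_left _ _)
    refine Summable.of_nonneg_of_le (fun k => by positivity) (fun k => ?_) h1
    rw [hp, FormalMultilinearSeries.ofScalars_norm, Real.norm_eq_abs]
    exact mul_le_mul_of_nonneg_left
      (pow_le_pow_left₀ r.coe_nonneg (le_max_right _ _) k) (abs_nonneg _)
  have hrad : 0 < p.radius := by rw [hradtop]; exact ENNReal.zero_lt_top
  have hball := p.hasFPowerSeriesOnBall hrad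
  rw [hsum_eq, contDiff_iff_contDiffAt]
  intro x
  refine (hball.analyticAt_of_mem ?_).contDiffAt
  rw [hradtop]
  simp [EMetric.mem_ball, edist_lt_top]

theorem stmt4 (c lam : ℝ) (hc : 0 < c) (u : ℝ → ℝ → ℝ)
    (hu : ∀ x t : ℝ, u x t = ∑' k : ℕ,
      (lam / (2 * c)) ^ (2 * k) * (c ^ 2 * t ^ 2 - x ^ 2) ^ k / ((k.factorial : ℝ)) ^ 2) :
    ContDiff ℝ (⊤ : ℕ∞) (fun p : ℝ × ℝ => u p.1 p.2) ∧
    ∀ x t : ℝ,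
      deriv (fun s => deriv (fun s' => u x s') s) t
        - c ^ 2 * deriv (fun y => deriv (fun y' => u y' t) y) x
      = lam ^ 2 * u x t := by
  set μ : ℝ := (lam / (2 * c)) ^ 2 with hμdef
  have hμ : 0 ≤ μ := sq_nonneg _
  have hA1s : ∀ r : ℝ, 1 ≤ r → Summable fun k : ℕ => |A1 μ k| * r ^ k :=
    aux_shift (hA0 μ hμ)
  have hA2s : ∀ r : ℝ, 1 ≤ r → Summable fun k : ℕ => |A2 μ k| * r ^ k :=
    aux_shift hA1s
  -- u in terms of F0
  have huF : ∀ x t : ℝ, u x t = ∑' k : ℕ, A0 μ k * (c ^ 2 * t ^ 2 - x ^ 2) ^ k := by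
    intro x t
    rw [hu]
    refine tsum_congr fun k => ?_
    simp only [A0]
    rw [pow_mul, ← hμdef]
    ring
  -- termwise derivatives
  have hd0 : ∀ w : ℝ, HasDerivAt (fun v : ℝ => ∑' k : ℕ, A0 μ k * v ^ k)
      (∑' k : ℕ, A1 μ k * w ^ k) w := fun w => aux_hasDerivAt (hA0 μ hμ) w
  have hd1 : ∀ w : ℝ, HasDerivAt (fun v : ℝ => ∑' k : ℕ, A1 μ k * v ^ k)
      (∑' k : ℕ, A2 μ k * w ^ k) w := fun w => aux_hasDerivAt hA1s w
  constructor
  · have hpoly : ContDiff ℝ (⊤ : ℕ∞) (fun q : ℝ × ℝ => c ^ 2 * q.2 ^ 2 - q.1 ^ 2) :=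
      (contDiff_const.mul (contDiff_snd.pow 2)).sub (contDiff_fst.pow 2)
    have heq : (fun q : ℝ × ℝ => u q.1 q.2)
        = (fun z : ℝ => ∑' k : ℕ, A0 μ k * z ^ k) ∘ (fun q : ℝ × ℝ => c ^ 2 * q.2 ^ 2 - q.1 ^ 2) :=
      funext fun q => huF q.1 q.2
    rw [heq]
    exact (hF_contDiff μ hμ).comp hpoly
  · intro x t
    have hginner_t : ∀ s : ℝ, HasDerivAt (fun s' : ℝ => c ^ 2 * s' ^ 2 - x ^ 2)
        (2 * c ^ 2 * s) s := by
      intro s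
      have h := ((hasDerivAt_pow 2 s).const_mul (c ^ 2)).sub_const (x ^ 2)
      convert h using 1
      all_goals try rfl
      push_cast; ring
    have hginner_x : ∀ y : ℝ, HasDerivAt (fun y' : ℝ => c ^ 2 * t ^ 2 - y' ^ 2)
        (-(2 * y)) y := by
      intro y
      have h := (hasDerivAt_pow 2 y).const_sub (c ^ 2 * t ^ 2)
      convert h using 1
      all_goals try rfl
      push_cast; ring
    -- first t-derivative
    have hut : ∀ x' s : ℝ, deriv (fun s' => u x' s') s
        = 2 * c ^ 2 * s * (∑' k : ℕ, A1 μ k * (c ^ 2 * s ^ 2 - x' ^ 2) ^ k) := by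
      intro x' s
      have hfun : (fun s' : ℝ => u x' s')
          = fun s' : ℝ => ∑' k : ℕ, A0 μ k * (c ^ 2 * s' ^ 2 - x' ^ 2) ^ k :=
        funext fun s' => huF x' s'
      rw [hfun]
      have hg : HasDerivAt (fun s' : ℝ => c ^ 2 * s' ^ 2 - x' ^ 2) (2 * c ^ 2 * s) s := by
        have h := ((hasDerivAt_pow 2 s).const_mul (c ^ 2)).sub_const (x' ^ 2)
        convert h using 1; all_goals (try rfl); all_goals (push_cast; ring)
      have h := (hd0 (c ^ 2 * s ^ 2 - x' ^ 2)).comp s hg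
      have hd := h.deriv
      rw [show ((fun v : ℝ => ∑' k : ℕ, A0 μ k * v ^ k) ∘ fun s' : ℝ => c ^ 2 * s' ^ 2 - x' ^ 2)
          = fun s' : ℝ => ∑' k : ℕ, A0 μ k * (c ^ 2 * s' ^ 2 - x' ^ 2) ^ k from rfl] at hd
      rw [hd]; ring
    -- first x-derivative
    have hux : ∀ y : ℝ, deriv (fun y' => u y' t) y
        = -(2 * y) * (∑' k : ℕ, A1 μ k * (c ^ 2 * t ^ 2 - y ^ 2) ^ k) := by
      intro y
      have hfun : (fun y' : ℝ => u y' t)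
          = fun y' : ℝ => ∑' k : ℕ, A0 μ k * (c ^ 2 * t ^ 2 - y' ^ 2) ^ k :=
        funext fun y' => huF y' t
      rw [hfun]
      have h := (hd0 (c ^ 2 * t ^ 2 - y ^ 2)).comp y (hginner_x y)
      have hd := h.deriv
      rw [show ((fun v : ℝ => ∑' k : ℕ, A0 μ k * v ^ k) ∘ fun y' : ℝ => c ^ 2 * t ^ 2 - y' ^ 2)
          = fun y' : ℝ => ∑' k : ℕ, A0 μ k * (c ^ 2 * t ^ 2 - y' ^ 2) ^ k from rfl] at hd
      rw [hd]; ring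
    -- second t-derivative
    have htt : deriv (fun s => deriv (fun s' => u x s') s) t
        = 2 * c ^ 2 * (∑' k : ℕ, A1 μ k * (c ^ 2 * t ^ 2 - x ^ 2) ^ k)
          + (2 * c ^ 2 * t) * ((∑' k : ℕ, A2 μ k * (c ^ 2 * t ^ 2 - x ^ 2) ^ k) * (2 * c ^ 2 * t)) := by
      have hfun : (fun s : ℝ => deriv (fun s' => u x s') s)
          = fun s : ℝ => 2 * c ^ 2 * s * (∑' k : ℕ, A1 μ k * (c ^ 2 * s ^ 2 - x ^ 2) ^ k) :=
        funext fun s => hut x s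
      rw [hfun]
      have h1 : HasDerivAt (fun s : ℝ => 2 * c ^ 2 * s) (2 * c ^ 2) t := by
        simpa using (hasDerivAt_id t).const_mul (2 * c ^ 2)
      have h2 : HasDerivAt (fun s : ℝ => ∑' k : ℕ, A1 μ k * (c ^ 2 * s ^ 2 - x ^ 2) ^ k)
          ((∑' k : ℕ, A2 μ k * (c ^ 2 * t ^ 2 - x ^ 2) ^ k) * (2 * c ^ 2 * t)) t := by
        have h := (hd1 (c ^ 2 * t ^ 2 - x ^ 2)).comp t (hginner_t t)
        rw [show ((fun v : ℝ => ∑' k : ℕ, A1 μ k * v ^ k) ∘ fun s : ℝ => c ^ 2 * s ^ 2 - x ^ 2)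
            = fun s : ℝ => ∑' k : ℕ, A1 μ k * (c ^ 2 * s ^ 2 - x ^ 2) ^ k from rfl] at h
        exact h
      have := (h1.mul h2).deriv
      exact this
    -- second x-derivative
    have hxx : deriv (fun y => deriv (fun y' => u y' t) y) x
        = (-2) * (∑' k : ℕ, A1 μ k * (c ^ 2 * t ^ 2 - x ^ 2) ^ k)
          + (-(2 * x)) * ((∑' k : ℕ, A2 μ k * (c ^ 2 * t ^ 2 - x ^ 2) ^ k) * (-(2 * x))) := by
      have hfun : (fun y : ℝ => deriv (fun y' => u y' t) y)
          = fun y : ℝ => -(2 * y) * (∑' k : ℕ, A1 μ k * (c ^ 2 * t ^ 2 - y ^ 2) ^ k) :=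
        funext fun y => hux y
      rw [hfun]
      have h1 : HasDerivAt (fun y : ℝ => -(2 * y)) (-2) x := by
        simpa using ((hasDerivAt_id x).const_mul (2:ℝ)).fun_neg
      have h2 : HasDerivAt (fun y : ℝ => ∑' k : ℕ, A1 μ k * (c ^ 2 * t ^ 2 - y ^ 2) ^ k)
          ((∑' k : ℕ, A2 μ k * (c ^ 2 * t ^ 2 - x ^ 2) ^ k) * (-(2 * x))) x := by
        have h := (hd1 (c ^ 2 * t ^ 2 - x ^ 2)).comp x (hginner_x x)
        rw [show ((fun v : ℝ => ∑' k : ℕ, A1 μ k * v ^ k) ∘ fun y : ℝ => c ^ 2 * t ^ 2 - y ^ 2)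
            = fun y : ℝ => ∑' k : ℕ, A1 μ k * (c ^ 2 * t ^ 2 - y ^ 2) ^ k from rfl] at h
        exact h
      have := (h1.mul h2).deriv
      exact this
    rw [htt, hxx, huF x t]
    have hid := hsum_id μ hμ hA1s hA2s (c ^ 2 * t ^ 2 - x ^ 2)
    have hμc : 4 * c ^ 2 * μ = lam ^ 2 := by
      rw [hμdef]
      field_simp
      ring
    linear_combination (4 * c ^ 2) * hid + (∑' k : ℕ, A0 μ k * (c ^ 2 * t ^ 2 - x ^ 2) ^ k) * hμc
end

section
/- Let α ∈ (0,1], λ > 0, c > 0 and t > 0. Then (1/(2π)) ∑_{k=1}^∞ (λ/c^α)^k (1/Γ(αk)) ∬_{{(x,y) : x²+y² < c²t²}} (c²t² - x² - y²)^{αk/2 - 1} dx dy = E_{α,1}(λ t^α) - 1. Consequently, the absolutely continuous component of the law of the fractional planar random motion, obtained by dividing this density by E_{α,1}(λ t^α), has total mass 1 - 1/E_{α,1}(λ t^α) over the disc of radius ct. -/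
/-!
In polar coordinates followed by `u = r²`, a radial function integrates over the plane as
`∬ f(x² + y²) = π ∫₀^∞ f(u) du`; hence `∬_{x²+y²<ρ} (ρ - x² - y²)^(s-1) = π ρ^s / s`. With
`ρ = c²t²`, `s = αk/2` and `αk Γ(αk) = Γ(αk + 1)`, the `k`-th term of the series becomes
`2π (λ t^α)^k / Γ(αk + 1)`, so the series sums to `2π (E_{α,1}(λ t^α) - 1)`. Dropping the
term `k = 0` is legitimate because the Mittag-Leffler series converges: by log-convexity of `Γ`,
`Γ(y + 1) ≤ Γ(y + α) (y + α)^(1-α)`, so consecutive terms have ratio `O(k^(-α))`.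
-/

open Real MeasureTheory

/-- Two-parameter Mittag-Leffler function `E_{a,b}(z) = ∑ z^k / Γ(ak+b)`. -/
noncomputable def ML (a b z : ℝ) : ℝ := ∑' k : ℕ, z ^ k / Real.Gamma (a * (k : ℝ) + b)

open Set Filter Topology

theorem integral_comp_sq_add_sq {E : Type*} [NormedAddCommGroup E] [NormedSpace ℝ E]
    (f : ℝ → E) : ∫ p : ℝ × ℝ, f (p.1 ^ 2 + p.2 ^ 2) = π • ∫ u in Ioi 0, f u := by
  have hpolar : ∀ p ∈ Ioi (0 : ℝ) ×ˢ Ioo (-π) π,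
      p.1 • f ((polarCoord.symm p).1 ^ 2 + (polarCoord.symm p).2 ^ 2) = p.1 • f (p.1 ^ 2) := by
    intro p _
    simp only [polarCoord_symm_apply, mul_pow, ← mul_add, cos_sq_add_sin_sq, mul_one]
  rw [← integral_comp_polarCoord_symm, polarCoord_target,
    setIntegral_congr_fun (measurableSet_Ioi.prod measurableSet_Ioo) hpolar,
    Measure.volume_eq_prod, ← Measure.prod_restrict, integral_fun_fst (fun r : ℝ => r • f (r ^ 2))]
  have hsubst := integral_comp_rpow_Ioi_of_pos (g := f) two_pos
  norm_num [rpow_two] at hsubst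
  have hangle : (volume.restrict (Ioo (-π) π)).real univ = 2 * π := by
    rw [Measure.real_def, Measure.restrict_apply_univ, Real.volume_Ioo,
      ENNReal.toReal_ofReal (by linarith [pi_pos])]
    ring
  simp_rw [← hsubst, mul_smul, integral_smul, hangle, smul_smul]
  ring_nf

theorem integral_Ioo_sub_rpow {ρ s : ℝ} (hρ : 0 ≤ ρ) (hs : 0 < s) :
    ∫ u in Ioo 0 ρ, (ρ - u) ^ (s - 1) = ρ ^ s / s := by
  rw [← integral_Ioc_eq_integral_Ioo, ← intervalIntegral.integral_of_le hρ,
    intervalIntegral.integral_comp_sub_left (fun u => u ^ (s - 1)),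
    integral_rpow (Or.inl (by linarith)), sub_self, sub_zero, sub_add_cancel, zero_rpow hs.ne',
    sub_zero]

theorem setIntegral_disc_sub_rpow {ρ s : ℝ} (hρ : 0 ≤ ρ) (hs : 0 < s) :
    ∫ p in {p : ℝ × ℝ | p.1 ^ 2 + p.2 ^ 2 < ρ}, (ρ - p.1 ^ 2 - p.2 ^ 2) ^ (s - 1)
      = π * (ρ ^ s / s) := by
  have hdisc : MeasurableSet {p : ℝ × ℝ | p.1 ^ 2 + p.2 ^ 2 < ρ} :=
    measurableSet_lt (by fun_prop) measurable_const
  have hradial : {p : ℝ × ℝ | p.1 ^ 2 + p.2 ^ 2 < ρ}.indicator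
      (fun p => (ρ - p.1 ^ 2 - p.2 ^ 2) ^ (s - 1))
      = fun p => (Iio ρ).indicator (fun u => (ρ - u) ^ (s - 1)) (p.1 ^ 2 + p.2 ^ 2) := by
    ext p
    simp only [indicator, mem_ofPred_eq, mem_Iio, sub_sub]
  rw [← integral_indicator hdisc, hradial, integral_comp_sq_add_sq,
    setIntegral_indicator measurableSet_Iio, Ioi_inter_Iio, integral_Ioo_sub_rpow hρ hs,
    smul_eq_mul]

theorem Real.Gamma_add_one_le_Gamma_add_mul_rpow {y a : ℝ} (hy : 0 < y) (ha₀ : 0 ≤ a)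
    (ha₁ : a ≤ 1) : Gamma (y + 1) ≤ Gamma (y + a) * (y + a) ^ (1 - a) := by
  have hya : 0 < y + a := by linarith
  have hconv := convexOn_log_Gamma.2 (mem_Ioi.2 hya) (mem_Ioi.2 (by linarith : 0 < y + a + 1))
    ha₀ (sub_nonneg.2 ha₁) (add_sub_cancel a 1)
  have hcomb : a • (y + a) + (1 - a) • (y + a + 1) = y + 1 := by simp only [smul_eq_mul]; ring
  rw [hcomb] at hconv
  simp only [Function.comp_apply, smul_eq_mul, Gamma_add_one hya.ne',
    log_mul hya.ne' (Gamma_pos_of_pos hya).ne'] at hconv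
  rw [← log_le_log_iff (Gamma_pos_of_pos (by linarith)) (by positivity),
    log_mul (Gamma_pos_of_pos hya).ne' (by positivity), log_rpow hya]
  linarith

theorem Real.Gamma_div_Gamma_add_le {y a : ℝ} (hy : 0 < y) (ha₀ : 0 ≤ a) (ha₁ : a ≤ 1)
    (hay : a ≤ y) : Gamma y / Gamma (y + a) ≤ 2 * (y + a) ^ (-a) := by
  have hya : 0 < y + a := by linarith
  have hkey := Gamma_add_one_le_Gamma_add_mul_rpow hy ha₀ ha₁
  rw [Gamma_add_one hy.ne', sub_eq_add_neg, rpow_add hya, rpow_one] at hkey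
  rw [div_le_iff₀ (Gamma_pos_of_pos hya)]
  have : 0 ≤ Gamma (y + a) * (y + a) ^ (-a) := by positivity
  nlinarith

theorem summable_pow_div_Gamma_mul_add_one {a : ℝ} (ha₀ : 0 < a) (ha₁ : a ≤ 1) (z : ℝ) :
    Summable fun k : ℕ => z ^ k / Gamma (a * k + 1) := by
  refine summable_of_ratio_norm_eventually_le (r := 1 / 2) (by norm_num) ?_
  have hlim : Tendsto (fun k : ℕ => |z| * (2 * (a * k + 1 + a) ^ (-a))) atTop (𝓝 0) := by
    have : Tendsto (fun k : ℕ => a * k + 1 + a) atTop atTop :=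
      tendsto_atTop_add_const_right _ _ (tendsto_atTop_add_const_right _ _
        (tendsto_natCast_atTop_atTop.const_mul_atTop ha₀))
    simpa using (((tendsto_rpow_neg_atTop ha₀).comp this).const_mul 2).const_mul |z|
  filter_upwards [hlim.eventually (ge_mem_nhds (by norm_num : (0 : ℝ) < 1 / 2))] with k hk
  have hy : 0 < a * k + 1 := by positivity
  have hratio := Gamma_div_Gamma_add_le hy ha₀.le ha₁ (by nlinarith [k.cast_nonneg (α := ℝ)])
  calc ‖z ^ (k + 1) / Gamma (a * ↑(k + 1) + 1)‖
      = |z| * (Gamma (a * k + 1) / Gamma (a * k + 1 + a)) * ‖z ^ k / Gamma (a * k + 1)‖ := by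
        rw [show a * ↑(k + 1) + 1 = a * k + 1 + a by push_cast; ring]
        simp only [norm_div, norm_pow, Real.norm_eq_abs, abs_of_pos (Gamma_pos_of_pos hy),
          abs_of_pos (Gamma_pos_of_pos (by linarith : 0 < a * k + 1 + a))]
        field_simp
        ring
    _ ≤ |z| * (2 * (a * k + 1 + a) ^ (-a)) * ‖z ^ k / Gamma (a * k + 1)‖ := by gcongr
    _ ≤ 1 / 2 * ‖z ^ k / Gamma (a * k + 1)‖ := by gcongr

theorem ML_one_eq_one_add_tsum {a : ℝ} (ha₀ : 0 < a) (ha₁ : a ≤ 1) (z : ℝ) :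
    ML a 1 z = 1 + ∑' k : ℕ, z ^ (k + 1) / Gamma (a * ((k : ℝ) + 1) + 1) := by
  rw [ML, (summable_pow_div_Gamma_mul_add_one ha₀ ha₁ z).tsum_eq_zero_add]
  simp

theorem sq_mul_sq_rpow_half {c t : ℝ} (hc : 0 ≤ c) (ht : 0 ≤ t) (a : ℝ) (n : ℕ) :
    (c ^ 2 * t ^ 2) ^ (a * n / 2) = (c ^ a) ^ n * (t ^ a) ^ n := by
  rw [← mul_pow, ← rpow_natCast_mul (by positivity), ← mul_pow, ← mul_rpow hc ht,
    ← rpow_mul_natCast (by positivity)]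
  push_cast
  ring_nf

theorem pow_div_Gamma_mul_setIntegral_disc {a lam c t : ℝ} {n : ℕ} (hc : 0 < c) (ht : 0 < t)
    (hn : 0 < a * n) :
    (lam / c ^ a) ^ n / Gamma (a * n) *
        ∫ p in {p : ℝ × ℝ | p.1 ^ 2 + p.2 ^ 2 < c ^ 2 * t ^ 2},
          (c ^ 2 * t ^ 2 - p.1 ^ 2 - p.2 ^ 2) ^ (a * n / 2 - 1)
      = 2 * π * ((lam * t ^ a) ^ n / Gamma (a * n + 1)) := by
  rw [setIntegral_disc_sub_rpow (by positivity) (by positivity), sq_mul_sq_rpow_half hc.le ht.le,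
    Gamma_add_one hn.ne', div_pow, mul_pow]
  have : 0 < Gamma (a * n) := Gamma_pos_of_pos hn
  have : 0 < (c ^ a) ^ n := by positivity
  field_simp

theorem stmt13 (a lam c t : ℝ) (ha : 0 < a ∧ a ≤ 1) (hlam : 0 < lam) (hc : 0 < c)
    (ht : 0 < t) :
    (1 / (2 * π)) * (∑' k : ℕ, (lam / c ^ a) ^ (k + 1) / Real.Gamma (a * ((k : ℝ) + 1)) *
        ∫ p in {p : ℝ × ℝ | p.1 ^ 2 + p.2 ^ 2 < c ^ 2 * t ^ 2},
          (c ^ 2 * t ^ 2 - p.1 ^ 2 - p.2 ^ 2) ^ (a * ((k : ℝ) + 1) / 2 - 1))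
      = ML a 1 (lam * t ^ a) - 1 ∧
    (1 / (2 * π)) * (∑' k : ℕ, (lam / c ^ a) ^ (k + 1) / Real.Gamma (a * ((k : ℝ) + 1)) *
        ∫ p in {p : ℝ × ℝ | p.1 ^ 2 + p.2 ^ 2 < c ^ 2 * t ^ 2},
          (c ^ 2 * t ^ 2 - p.1 ^ 2 - p.2 ^ 2) ^ (a * ((k : ℝ) + 1) / 2 - 1))
        / ML a 1 (lam * t ^ a)
      = 1 - 1 / ML a 1 (lam * t ^ a) := by
  obtain ⟨ha₀, ha₁⟩ := ha
  have hterm := fun k : ℕ =>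
    pow_div_Gamma_mul_setIntegral_disc (a := a) (lam := lam) (n := k + 1) hc ht (by positivity)
  push_cast at hterm
  simp only [hterm, tsum_mul_left, ML_one_eq_one_add_tsum ha₀ ha₁]
  constructor
  · field_simp
    ring
  · field_simp
    ring
end

section
/- Let α ∈ (1,2], λ > 0, c > 0, t > 0 and w > 0. Then ∑_{k=0}^∞ (kα/2 + 1)(kα/2) · w^{kα-2} (λ t^{α/2})^k / (π² (ct)^{kα+2} Γ(kα/2 + 1)) = [λ / (π² c^{2+α} t^{2+α/2} w^{2-α})] · [ E_{α/2, α/2-1}((λ/(c^α t^{α/2})) w^α) + 2 E_{α/2, α/2}((λ/(c^α t^{α/2})) w^α) ]. (With w = √(c²t² - ‖x‖²), ‖x‖ < ct, x ∈ ℝ⁴, this is the closed form of the absolutely continuous component, up to the normalizing factor E_{α/2,1}(λ t^{α/2}), of the density of the fractional random flight in ℝ⁴.) -/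
/-!
The `k = 0` term vanishes. After shifting the index, the `k`-th term is
`pre * (m + 1) * m * z ^ k / Γ(m + 1)` with `m = (k + 1)α/2` and `pre`, `z` the prefactor and the
argument on the right. For the reciprocal Gamma function `(m + 1) m / Γ(m + 1) = 1/Γ(m - 1) + 2/Γ(m)`
(from `1/Γ(s) = s/Γ(s + 1)`), which splits the series into the two Mittag-Leffler series; these
converge because `Γ` eventually dominates every exponential.
-/

open Real

open Filter
open scoped Nat

namespace Real

-- Mathlib's `Gamma` vanishes at its poles, so `(Gamma s)⁻¹` is the entire reciprocal Gamma function
-- and the identities below hold for every real argument.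
theorem inv_Gamma_eq_mul_inv_Gamma_add_one (s : ℝ) : (Gamma s)⁻¹ = s * (Gamma (s + 1))⁻¹ := by
  rcases ne_or_eq s 0 with hs | rfl
  · rw [Gamma_add_one hs, mul_inv, mul_inv_cancel_left₀ hs]
  · rw [zero_add, Gamma_zero, inv_zero, zero_mul]

theorem add_one_mul_self_mul_inv_Gamma_add_one (m : ℝ) :
    (m + 1) * m * (Gamma (m + 1))⁻¹ = (Gamma (m - 1))⁻¹ + 2 * (Gamma m)⁻¹ := by
  rw [inv_Gamma_eq_mul_inv_Gamma_add_one (m - 1), sub_add_cancel,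
    inv_Gamma_eq_mul_inv_Gamma_add_one m]
  ring

theorem eventually_rpow_le_Gamma {R : ℝ} (hR : 0 ≤ R) : ∀ᶠ x in atTop, R ^ x ≤ Gamma x := by
  set M := max R 1
  have hM : 1 ≤ M := le_max_right R 1
  have hfac : ∀ᶠ n : ℕ in atTop, M ^ (n + 2) ≤ n ! := by
    have hlim := (FloorSemiring.tendsto_pow_div_factorial_atTop M).const_mul (M ^ 2)
    rw [mul_zero] at hlim
    filter_upwards [hlim.eventually (eventually_le_nhds one_pos)] with n hn
    have hn_fac : (0 : ℝ) < n ! := by positivity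
    rw [← mul_div_assoc, ← pow_add, add_comm, div_le_one hn_fac] at hn
    exact hn
  obtain ⟨N, hN⟩ := eventually_atTop.1 hfac
  filter_upwards [eventually_ge_atTop ((N : ℝ) + 2)] with x hx
  set n := ⌊x - 1⌋₊
  have hNn : N + 1 ≤ n := Nat.le_floor (by push_cast; linarith)
  have hn_le : (n : ℝ) + 1 ≤ x := by
    linarith [Nat.floor_le (show 0 ≤ x - 1 by linarith [N.cast_nonneg (α := ℝ)])]
  have hn_gt : x < n + 2 := by linarith [Nat.lt_floor_add_one (x - 1)]
  have hn_two : (2 : ℝ) ≤ n + 1 := by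
    have : (1 : ℝ) ≤ n := by exact_mod_cast (Nat.le_add_left 1 N).trans hNn
    linarith
  calc R ^ x ≤ M ^ x := rpow_le_rpow hR (le_max_left R 1) (by linarith)
    _ ≤ M ^ ((n + 2 : ℕ) : ℝ) := rpow_le_rpow_of_exponent_le hM (by push_cast; linarith)
    _ = M ^ (n + 2) := rpow_natCast M (n + 2)
    _ ≤ n ! := hN n (by omega)
    _ = Gamma (n + 1) := (Gamma_nat_eq_factorial n).symm
    _ ≤ Gamma x := Gamma_strictMonoOn_Ici.monotoneOn hn_two (hn_two.trans hn_le) hn_le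

end Real

theorem summable_pow_div_Gamma_mul_add {a : ℝ} (ha : 0 < a) (b z : ℝ) :
    Summable fun k : ℕ => z ^ k / Gamma (a * k + b) := by
  set C := |z| + 1
  have hC : 0 < C := by positivity
  set R := C ^ a⁻¹
  have hR : 0 < R := by positivity
  have hR_pow (k : ℕ) : R ^ (a * k + b) = C ^ k * R ^ b := by
    rw [rpow_add hR, ← rpow_mul hC.le, inv_mul_cancel_left₀ ha.ne', rpow_natCast]
  have hlin : Tendsto (fun k : ℕ => a * k + b) atTop atTop :=
    tendsto_atTop_add_const_right _ b (tendsto_natCast_atTop_atTop.const_mul_atTop ha)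
  refine .of_norm_bounded_eventually_nat
    ((summable_geometric_of_lt_one (r := |z| / C) (by positivity) ?_).mul_left (R ^ (-b))) ?_
  · exact (div_lt_one hC).2 (lt_add_one _)
  filter_upwards [hlin.eventually (eventually_rpow_le_Gamma hR.le),
    hlin.eventually_gt_atTop 0] with k hle hpos
  rw [hR_pow] at hle
  calc ‖z ^ k / Gamma (a * k + b)‖ = |z| ^ k / Gamma (a * k + b) := by
        rw [norm_div, norm_pow, Real.norm_eq_abs, Real.norm_of_nonneg (Gamma_pos_of_pos hpos).le]
    _ ≤ |z| ^ k / (C ^ k * R ^ b) := div_le_div_of_nonneg_left (by positivity) (by positivity) hle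
    _ = R ^ (-b) * (|z| / C) ^ k := by rw [rpow_neg hR.le, div_pow]; field_simp

theorem hasSum_ML_sub_one_add_two_mul_ML {a : ℝ} (ha : 0 < a) (b z : ℝ) :
    HasSum (fun k : ℕ => (a * k + b + 1) * (a * k + b) * z ^ k / Gamma (a * k + b + 1))
      (ML a (b - 1) z + 2 * ML a b z) := by
  unfold ML
  convert (summable_pow_div_Gamma_mul_add ha (b - 1) z).hasSum.add
    ((summable_pow_div_Gamma_mul_add ha b z).hasSum.mul_left 2) using 1
  funext k
  rw [mul_div_right_comm, div_eq_mul_inv _ (Gamma _), add_one_mul_self_mul_inv_Gamma_add_one,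
    ← add_sub_assoc]
  ring

theorem stmt19 (a lam c t w : ℝ) (ha : 1 < a ∧ a ≤ 2) (hlam : 0 < lam) (hc : 0 < c)
    (ht : 0 < t) (hw : 0 < w) :
    (∑' k : ℕ, ((k : ℝ) * a / 2 + 1) * ((k : ℝ) * a / 2) * w ^ ((k : ℝ) * a - 2) *
        (lam * t ^ (a / 2)) ^ k /
        (π ^ 2 * (c * t) ^ ((k : ℝ) * a + 2) * Real.Gamma ((k : ℝ) * a / 2 + 1)))
      = lam / (π ^ 2 * c ^ (2 + a) * t ^ (2 + a / 2) * w ^ (2 - a)) *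
        (ML (a / 2) (a / 2 - 1) (lam / (c ^ a * t ^ (a / 2)) * w ^ a)
          + 2 * ML (a / 2) (a / 2) (lam / (c ^ a * t ^ (a / 2)) * w ^ a)) := by
  set z := lam / (c ^ a * t ^ (a / 2)) * w ^ a
  set pre := lam / (π ^ 2 * c ^ (2 + a) * t ^ (2 + a / 2) * w ^ (2 - a))
  have hpow (k : ℕ) : w ^ (((k + 1 : ℕ) : ℝ) * a - 2) * (lam * t ^ (a / 2)) ^ (k + 1) /
      (π ^ 2 * (c * t) ^ (((k + 1 : ℕ) : ℝ) * a + 2)) = pre * z ^ k := by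
    refine log_injOn_pos (Set.mem_Ioi.2 (by positivity)) (Set.mem_Ioi.2 (by positivity)) ?_
    simp (disch := positivity) only [pre, z, log_mul, log_div, Real.log_pow, log_rpow]
    push_cast
    ring
  have hm (k : ℕ) : ((k + 1 : ℕ) : ℝ) * a / 2 = a / 2 * k + a / 2 := by push_cast; ring
  have hsum :=
    (hasSum_ML_sub_one_add_two_mul_ML (by linarith [ha.1] : 0 < a / 2) (a / 2) z).mul_left pre
  refine ((hasSum_nat_add_iff' 1).1 ?_).tsum_eq
  simp only [Finset.sum_range_one, Nat.cast_zero, zero_mul, zero_div, mul_zero, sub_zero]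
  refine hsum.congr_fun fun k => ?_
  rw [hm]
  linear_combination (a / 2 * k + a / 2 + 1) * (a / 2 * k + a / 2) / Gamma (a / 2 * k + a / 2 + 1) *
    hpow k
end
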